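/- arXiv:1803.11318 — 2 statements merged into one kernel-verified Lean document; each statement's English description precedes it below -/
import Mathlib

section
/- For 1 < p < 2 there exists a constant c_p > 0 such that for all vectors x, y in ℝⁿ, ⟨|x|^{p-2}x − |y|^{p-2}y, x − y⟩ ≥ c_p |x − y|² (|x| + |y|)^{p-2}, where the right-hand side is interpreted as 0 when x = y = 0. -/
open MeasureTheory Real RealInnerProductSpace

/-!
With `a = ‖x‖`, `b = ‖y‖` and `s = ⟪x, y⟫`, both sides of the inequality (with `c_p = p - 1`)
depend on `x, y` only through `a, b, s`, and the difference of the two sides is affine in `s`.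
As `|s| ≤ a b`, it suffices to check the two endpoints `s = ± a b`, i.e. collinear `x, y`.
For `s = a b` this is the one-dimensional estimate
`(a^q - b^q)(a - b) ≥ q (a - b)² (a + b)^(q-1)` with `q = p - 1`, which comes from the tangent
line of the concave function `t ↦ t^q`; for `s = -a b` it is the subadditivity
`(a + b)^q ≤ a^q + b^q`.
-/

namespace Real

theorem rpow_le_rpow_add_mul_sub {q x y : ℝ} (hq0 : 0 ≤ q) (hq1 : q ≤ 1) (hx : 0 < x)
    (hy : 0 ≤ y) : y ^ q ≤ x ^ q + q * x ^ (q - 1) * (y - x) := by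
  have hbern := rpow_one_add_le_one_add_mul_self
    (show -1 ≤ (y - x) / x by rw [le_div_iff₀ hx]; linarith) hq0 hq1
  rw [show 1 + (y - x) / x = y / x by field_simp; ring, div_rpow hy hx.le,
    div_le_iff₀ (rpow_pos_of_pos hx q)] at hbern
  calc y ^ q ≤ (1 + q * ((y - x) / x)) * x ^ q := hbern
    _ = x ^ q + q * (x ^ q / x) * (y - x) := by field_simp
    _ = x ^ q + q * x ^ (q - 1) * (y - x) := by rw [← rpow_sub_one hx.ne' q]

theorem mul_sub_mul_add_rpow_sub_one_le {q a b : ℝ} (hq0 : 0 ≤ q) (hq1 : q ≤ 1) (hb : 0 ≤ b)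
    (hba : b ≤ a) : q * (a - b) * (a + b) ^ (q - 1) ≤ a ^ q - b ^ q := by
  rcases (hb.trans hba).eq_or_lt with rfl | ha
  · obtain rfl : b = 0 := le_antisymm hba hb
    simp
  have htangent := rpow_le_rpow_add_mul_sub hq0 hq1 ha hb
  have hmono : (a + b) ^ (q - 1) ≤ a ^ (q - 1) :=
    rpow_le_rpow_of_nonpos ha (by linarith) (by linarith)
  calc q * (a - b) * (a + b) ^ (q - 1) ≤ q * (a - b) * a ^ (q - 1) :=
        mul_le_mul_of_nonneg_left hmono (mul_nonneg hq0 (by linarith))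
    _ ≤ a ^ q - b ^ q := by linarith

theorem mul_sq_sub_mul_add_rpow_sub_one_le {q a b : ℝ} (hq0 : 0 ≤ q) (hq1 : q ≤ 1)
    (ha : 0 ≤ a) (hb : 0 ≤ b) :
    q * (a - b) ^ 2 * (a + b) ^ (q - 1) ≤ (a ^ q - b ^ q) * (a - b) := by
  rcases le_total b a with hba | hab
  · have h := mul_le_mul_of_nonneg_right (mul_sub_mul_add_rpow_sub_one_le hq0 hq1 hb hba)
      (sub_nonneg.mpr hba)
    linarith
  · have h := mul_le_mul_of_nonneg_right (mul_sub_mul_add_rpow_sub_one_le hq0 hq1 ha hab)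
      (sub_nonneg.mpr hab)
    rw [add_comm b a] at h
    linarith

theorem add_mul_nonneg_of_abs_le {α β m s : ℝ} (hpos : 0 ≤ α + β * m) (hneg : 0 ≤ α - β * m)
    (hs : |s| ≤ m) : 0 ≤ α + β * s := by
  obtain ⟨hs₁, hs₂⟩ := abs_le.mp hs
  rcases le_total 0 β with hβ | hβ
  · nlinarith [mul_le_mul_of_nonneg_left hs₁ hβ]
  · nlinarith [mul_le_mul_of_nonpos_left hs₂ hβ]

theorem mul_sq_sub_two_mul_add_sq_mul_rpow_le_of_abs_le {p a b s : ℝ} (hp1 : 1 < p)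
    (hp2 : p ≤ 2) (ha : 0 ≤ a) (hb : 0 ≤ b) (hs : |s| ≤ a * b) :
    (p - 1) * (a ^ 2 - 2 * s + b ^ 2) * (a + b) ^ (p - 2) ≤
      a ^ (p - 2) * a ^ 2 + b ^ (p - 2) * b ^ 2 - (a ^ (p - 2) + b ^ (p - 2)) * s := by
  have hq0 : 0 ≤ p - 1 := by linarith
  have hq1 : p - 1 ≤ 1 := by linarith
  have hshift : ∀ t : ℝ, 0 ≤ t → t ^ (p - 1) = t ^ (p - 2) * t := fun t ht => by
    rw [← rpow_add_one' ht (by linarith)]; ring_nf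
  have hcollinear := mul_sq_sub_mul_add_rpow_sub_one_le hq0 hq1 ha hb
  have hopposite : (p - 1) * (a + b) ^ (p - 1) ≤ a ^ (p - 1) + b ^ (p - 1) :=
    calc (p - 1) * (a + b) ^ (p - 1) ≤ (a + b) ^ (p - 1) :=
          mul_le_of_le_one_left (rpow_nonneg (add_nonneg ha hb) _) hq1
      _ ≤ a ^ (p - 1) + b ^ (p - 1) := rpow_add_le_add_rpow ha hb hq0 hq1
  rw [show p - 1 - 1 = p - 2 by ring, hshift a ha, hshift b hb] at hcollinear
  rw [hshift a ha, hshift b hb, hshift (a + b) (add_nonneg ha hb)] at hopposite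
  have hendpoints := add_mul_nonneg_of_abs_le
    (α := a ^ (p - 2) * a ^ 2 + b ^ (p - 2) * b ^ 2 -
      (p - 1) * (a ^ 2 + b ^ 2) * (a + b) ^ (p - 2))
    (β := 2 * (p - 1) * (a + b) ^ (p - 2) - a ^ (p - 2) - b ^ (p - 2))
    (by linear_combination hcollinear)
    (by linear_combination mul_le_mul_of_nonneg_right hopposite (add_nonneg ha hb)) hs
  linear_combination hendpoints

end Real

theorem mul_norm_sub_sq_mul_rpow_le_inner {E : Type*} [NormedAddCommGroup E]
    [InnerProductSpace ℝ E] {p : ℝ} (hp1 : 1 < p) (hp2 : p ≤ 2) (x y : E) :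
    (p - 1) * ‖x - y‖ ^ 2 * (‖x‖ + ‖y‖) ^ (p - 2) ≤
      ⟪‖x‖ ^ (p - 2) • x - ‖y‖ ^ (p - 2) • y, x - y⟫ := by
  have hinner : ⟪‖x‖ ^ (p - 2) • x - ‖y‖ ^ (p - 2) • y, x - y⟫ =
      ‖x‖ ^ (p - 2) * ‖x‖ ^ 2 + ‖y‖ ^ (p - 2) * ‖y‖ ^ 2 -
        (‖x‖ ^ (p - 2) + ‖y‖ ^ (p - 2)) * ⟪x, y⟫ := by
    simp only [inner_sub_left, inner_sub_right, real_inner_smul_left,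
      real_inner_self_eq_norm_sq, real_inner_comm x y]
    ring
  rw [hinner, norm_sub_sq_real]
  exact mul_sq_sub_two_mul_add_sq_mul_rpow_le_of_abs_le hp1 hp2 (norm_nonneg x)
    (norm_nonneg y) (abs_real_inner_le_norm x y)

theorem stmt_1 (p : ℝ) (hp1 : 1 < p) (hp2 : p < 2) (n : ℕ) :
    ∃ c : ℝ, 0 < c ∧ ∀ x y : EuclideanSpace ℝ (Fin n),
      ⟪(‖x‖ ^ (p - 2)) • x - (‖y‖ ^ (p - 2)) • y, x - y⟫ ≥
        c * ‖x - y‖ ^ (2 : ℝ) * (‖x‖ + ‖y‖) ^ (p - 2) := by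
  refine ⟨p - 1, by linarith, fun x y => ?_⟩
  rw [rpow_two]
  exact mul_norm_sub_sq_mul_rpow_le_inner hp1 hp2.le x y
end

section
/- For 1 < p < 2, for all vectors x, y in ℝⁿ, ⟨|x|^{p-2}x − |y|^{p-2}y, x − y⟩ ≥ c_p |x − y|² (1 + |x| + |y|)^{p-2} for some constant c_p > 0 depending only on p. -/
open MeasureTheory Real RealInnerProductSpace

private lemma rpow_pm2_mul {p : ℝ} (hp1 : 1 < p) (hp2 : p < 2) {c : ℝ} (hc : 0 ≤ c) :
    c ^ (p - 2) * c = c ^ (p - 1) := by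
  rcases eq_or_lt_of_le hc with h | h
  · rw [← h, Real.zero_rpow (by linarith), Real.zero_rpow (by linarith), mul_zero]
  · rw [← Real.rpow_add_one h.ne' (p - 2), show p - 2 + 1 = p - 1 by ring]

private lemma rpow_pm1_mul {p : ℝ} (hp1 : 1 < p) {c : ℝ} (hc : 0 ≤ c) :
    c ^ (p - 1) * c = c ^ p := by
  rcases eq_or_lt_of_le hc with h | h
  · rw [← h, Real.zero_rpow (by linarith), Real.zero_rpow (by linarith), zero_mul]
  · rw [← Real.rpow_add_one h.ne' (p - 1), sub_add_cancel]

private lemma L1 {p : ℝ} (hp1 : 1 < p) (hp2 : p < 2) {a b : ℝ} (hb : 0 ≤ b) (hab : b ≤ a)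
    (ha : 0 < a) : (p - 1) * (a - b) * a ^ (p - 2) ≤ a ^ (p - 1) - b ^ (p - 1) := by
  have hb1 : (1 + (b / a - 1)) ^ (p - 1) ≤ 1 + (p - 1) * (b / a - 1) :=
    rpow_one_add_le_one_add_mul_self (by
      have := div_nonneg hb ha.le; linarith) (by linarith) (by linarith)
  have e : 1 + (b / a - 1) = b / a := by ring
  rw [e] at hb1
  have h2 : a ^ (p - 2) * a = a ^ (p - 1) := rpow_pm2_mul hp1 hp2 ha.le
  have h3 : a ^ (p - 1) * (b / a - 1) = (b - a) * a ^ (p - 2) := by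
    field_simp
    linear_combination (a - b) * h2
  have key : b ^ (p - 1) ≤ a ^ (p - 1) * (1 + (p - 1) * (b / a - 1)) := by
    calc b ^ (p - 1) = (a * (b / a)) ^ (p - 1) := by rw [mul_div_cancel₀ _ ha.ne']
    _ = a ^ (p - 1) * (b / a) ^ (p - 1) := Real.mul_rpow ha.le (div_nonneg hb ha.le)
    _ ≤ a ^ (p - 1) * (1 + (p - 1) * (b / a - 1)) :=
        mul_le_mul_of_nonneg_left hb1 (Real.rpow_nonneg ha.le _)
  have hid : a ^ (p - 1) * (1 + (p - 1) * (b / a - 1)) =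
      a ^ (p - 1) - (p - 1) * (a - b) * a ^ (p - 2) := by
    linear_combination (p - 1) * h3
  rw [hid] at key
  linarith

private lemma L2 {q : ℝ} (hq0 : 0 ≤ q) (hq1 : q ≤ 1) {a b : ℝ} (ha : 0 ≤ a) (hb : 0 ≤ b) :
    (a + b) ^ q ≤ a ^ q + b ^ q := by
  have h := NNReal.rpow_add_le_add_rpow a.toNNReal b.toNNReal hq0 hq1
  have h' := NNReal.coe_le_coe.2 h
  push_cast at h'
  rwa [Real.coe_toNNReal _ ha, Real.coe_toNNReal _ hb] at h'

private lemma key_scalar {p : ℝ} (hp1 : 1 < p) (hp2 : p < 2) (a b t : ℝ) (hb : 0 ≤ b)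
    (hab : b ≤ a) (ht : |t| ≤ a * b) :
    (p - 1) * (a ^ 2 + b ^ 2 - 2 * t) * (1 + a + b) ^ (p - 2) ≤
      a ^ p + b ^ p - (a ^ (p - 2) + b ^ (p - 2)) * t := by
  have ha : 0 ≤ a := hb.trans hab
  rcases eq_or_lt_of_le ha with h0 | hapos
  · have hb0 : b = 0 := le_antisymm (hab.trans_eq h0.symm) hb
    have ht0 : t = 0 := by
      rw [← h0, zero_mul] at ht
      exact abs_eq_zero.1 (le_antisymm ht (abs_nonneg t))
    subst hb0; subst ht0
    rw [← h0]
    simp [Real.zero_rpow (show p ≠ 0 by linarith),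
      Real.zero_rpow (show p - 2 ≠ 0 by linarith)]
  set K := (1 + a + b) ^ (p - 2) with hK
  have hKpos : 0 < K := Real.rpow_pos_of_pos (by linarith) _
  have ht1 : -(a * b) ≤ t := neg_le_of_abs_le ht
  have ht2 : t ≤ a * b := le_of_abs_le ht
  have ha2 : a ^ (p - 2) * a = a ^ (p - 1) := rpow_pm2_mul hp1 hp2 ha
  have ha1 : a ^ (p - 1) * a = a ^ p := rpow_pm1_mul hp1 ha
  have hb2 : b ^ (p - 2) * b = b ^ (p - 1) := rpow_pm2_mul hp1 hp2 hb
  have hb1 : b ^ (p - 1) * b = b ^ p := rpow_pm1_mul hp1 hb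
  have hKab : K ≤ (a + b) ^ (p - 2) := by
    rcases eq_or_lt_of_le hb with hb0 | hbpos
    · rw [← hb0, add_zero]
      exact Real.rpow_le_rpow_of_nonpos hapos (by linarith) (by linarith)
    · exact Real.rpow_le_rpow_of_nonpos (by linarith) (by linarith) (by linarith)
  have hsub : (a + b) ^ (p - 1) ≤ a ^ (p - 1) + b ^ (p - 1) :=
    L2 (by linarith) (by linarith) ha hb
  have habK : (a + b) * (a + b) ^ (p - 2) = (a + b) ^ (p - 1) := by
    rw [mul_comm]; exact rpow_pm2_mul hp1 hp2 (by linarith)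
  -- endpoint t = -(a*b)
  have hneg : (p - 1) * (a + b) ^ 2 * K ≤
      a ^ p + b ^ p + (a ^ (p - 2) + b ^ (p - 2)) * (a * b) := by
    have e1 : a ^ p + b ^ p + (a ^ (p - 2) + b ^ (p - 2)) * (a * b)
        = (a ^ (p - 1) + b ^ (p - 1)) * (a + b) := by
      linear_combination -ha1 - hb1 + b * ha2 + a * hb2
    rw [e1]
    have c1 : (p - 1) * (a + b) ^ 2 * K ≤ (a + b) ^ 2 * K := by
      nlinarith [mul_nonneg (sq_nonneg (a + b)) hKpos.le]
    have hmid : (a + b) ^ 2 * (a + b) ^ (p - 2) = (a + b) * (a + b) ^ (p - 1) := by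
      linear_combination (a + b) * habK
    have c2 : (a + b) ^ 2 * K ≤ (a + b) * (a + b) ^ (p - 1) := by
      have h := mul_le_mul_of_nonneg_left hKab (sq_nonneg (a + b))
      linarith [hmid]
    have c3 := mul_le_mul_of_nonneg_left hsub (show (0:ℝ) ≤ a + b by linarith)
    linarith [c1, c2, c3]
  -- endpoint t = a*b
  have hKa : K ≤ a ^ (p - 2) := Real.rpow_le_rpow_of_nonpos hapos (by linarith) (by linarith)
  have hpos : (p - 1) * (a - b) ^ 2 * K ≤
      a ^ p + b ^ p - (a ^ (p - 2) + b ^ (p - 2)) * (a * b) := by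
    have e2 : a ^ p + b ^ p - (a ^ (p - 2) + b ^ (p - 2)) * (a * b)
        = (a - b) * (a ^ (p - 1) - b ^ (p - 1)) := by
      linear_combination -ha1 - hb1 - b * ha2 - a * hb2
    rw [e2]
    have l1 := L1 hp1 hp2 hb hab hapos
    have c3 : (p - 1) * (a - b) * K ≤ (p - 1) * (a - b) * a ^ (p - 2) :=
      mul_le_mul_of_nonneg_left hKa (by nlinarith)
    have c4 := mul_le_mul_of_nonneg_left (c3.trans l1) (sub_nonneg.2 hab)
    linarith [c4]
  -- affine interpolation in t between the endpoints
  rcases le_or_gt 0 (2 * (p - 1) * K - (a ^ (p - 2) + b ^ (p - 2))) with hm | hm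
  · have hprod := mul_nonneg hm (show (0:ℝ) ≤ t + a * b by linarith)
    linarith [hneg, hprod]
  · have hprod := mul_nonneg (show (0:ℝ) ≤ (a ^ (p - 2) + b ^ (p - 2)) - 2 * (p - 1) * K by
      linarith) (show (0:ℝ) ≤ a * b - t by linarith)
    linarith [hpos, hprod]

private lemma key_scalar' {p : ℝ} (hp1 : 1 < p) (hp2 : p < 2) (a b t : ℝ) (ha : 0 ≤ a)
    (hb : 0 ≤ b) (ht : |t| ≤ a * b) :
    (p - 1) * (a ^ 2 + b ^ 2 - 2 * t) * (1 + a + b) ^ (p - 2) ≤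
      a ^ p + b ^ p - (a ^ (p - 2) + b ^ (p - 2)) * t := by
  rcases le_total b a with h | h
  · exact key_scalar hp1 hp2 a b t hb h ht
  · have := key_scalar hp1 hp2 b a t ha h (by rwa [mul_comm])
    rw [show 1 + b + a = 1 + a + b by ring] at this
    linarith

theorem stmt_2 (p : ℝ) (hp1 : 1 < p) (hp2 : p < 2) (n : ℕ) :
    ∃ c : ℝ, 0 < c ∧ ∀ x y : EuclideanSpace ℝ (Fin n),
      ⟪(‖x‖ ^ (p - 2)) • x - (‖y‖ ^ (p - 2)) • y, x - y⟫ ≥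
        c * ‖x - y‖ ^ (2 : ℝ) * (1 + ‖x‖ + ‖y‖) ^ (p - 2) := by
  refine ⟨p - 1, by linarith, fun x y => ?_⟩
  have e1 : ‖x‖ ^ (p - 2) * ‖x‖ ^ 2 = ‖x‖ ^ p := by
    rw [sq, ← mul_assoc, rpow_pm2_mul hp1 hp2 (norm_nonneg x), rpow_pm1_mul hp1 (norm_nonneg x)]
  have e2 : ‖y‖ ^ (p - 2) * ‖y‖ ^ 2 = ‖y‖ ^ p := by
    rw [sq, ← mul_assoc, rpow_pm2_mul hp1 hp2 (norm_nonneg y), rpow_pm1_mul hp1 (norm_nonneg y)]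
  have expand : ⟪(‖x‖ ^ (p - 2)) • x - (‖y‖ ^ (p - 2)) • y, x - y⟫
      = ‖x‖ ^ p + ‖y‖ ^ p - (‖x‖ ^ (p - 2) + ‖y‖ ^ (p - 2)) * ⟪x, y⟫ := by
    rw [inner_sub_left, inner_sub_right, inner_sub_right, real_inner_smul_left,
      real_inner_smul_left, real_inner_smul_left, real_inner_smul_left,
      real_inner_self_eq_norm_sq, real_inner_self_eq_norm_sq, real_inner_comm y x]
    linear_combination e1 + e2
  have hnorm : ‖x - y‖ ^ (2:ℝ) = ‖x‖ ^ 2 + ‖y‖ ^ 2 - 2 * ⟪x, y⟫ := by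
    rw [show (2:ℝ) = ((2:ℕ):ℝ) by norm_num, Real.rpow_natCast, norm_sub_sq_real]; ring
  rw [ge_iff_le, expand, hnorm]
  exact key_scalar' hp1 hp2 ‖x‖ ‖y‖ ⟪x, y⟫ (norm_nonneg x) (norm_nonneg y)
    (abs_real_inner_le_norm x y)
end
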